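/- arXiv:math/0406443 — 2 statements merged into one kernel-verified Lean document; each statement's English description precedes it below -/
import Mathlib

section
/- Let G be the group presented by ⟨a, s, t | a² = 1, [a, t⁻¹at] = 1, [s,t] = 1, s⁻¹as = a·(t⁻¹at)⟩. Then for all integers i and j, the elements t⁻ⁱ a tⁱ and t⁻ʲ a tʲ commute in G; that is, [a^{tⁱ}, a^{tʲ}] = 1 in G for all i, j ∈ ℤ. -/
/-- The three generators `a`, `s`, `t`. -/
inductive Gen : Type
  | a | s | t

/-- The relators of the presentation
`⟨a, s, t | a² = 1, [a, t⁻¹at] = 1, [s,t] = 1, s⁻¹as = a·(t⁻¹at)⟩`,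
where `[x,y] = x⁻¹y⁻¹xy`. -/
def rels : Set (FreeGroup Gen) :=
  { (FreeGroup.of Gen.a) ^ 2,
    (FreeGroup.of Gen.a)⁻¹ *
        ((FreeGroup.of Gen.t)⁻¹ * FreeGroup.of Gen.a * FreeGroup.of Gen.t)⁻¹ *
        FreeGroup.of Gen.a *
        ((FreeGroup.of Gen.t)⁻¹ * FreeGroup.of Gen.a * FreeGroup.of Gen.t),
    (FreeGroup.of Gen.s)⁻¹ * (FreeGroup.of Gen.t)⁻¹ * FreeGroup.of Gen.s * FreeGroup.of Gen.t,
    ((FreeGroup.of Gen.s)⁻¹ * FreeGroup.of Gen.a * FreeGroup.of Gen.s)⁻¹ *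
        (FreeGroup.of Gen.a *
          ((FreeGroup.of Gen.t)⁻¹ * FreeGroup.of Gen.a * FreeGroup.of Gen.t)) }

/-- The group `G` of the paper. -/
abbrev G := PresentedGroup rels

def a : G := PresentedGroup.of Gen.a
def s : G := PresentedGroup.of Gen.s
def t : G := PresentedGroup.of Gen.t

def φ : FreeGroup Gen →* G := QuotientGroup.mk' _

lemma rel_eq_one {r : FreeGroup Gen} (h : r ∈ rels) : φ r = 1 :=
  (QuotientGroup.eq_one_iff r).mpr (Subgroup.subset_normalClosure h)

lemma comm_of_eq_one {M : Type*} [Group M] {x y : M} (h : x⁻¹ * y⁻¹ * x * y = 1) :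
    Commute x y := by
  rw [commute_iff_eq]
  have := congrArg (fun g => y * x * g) h
  simp only [mul_assoc, inv_mul_cancel_left, inv_mul_cancel, mul_one] at this
  simpa [mul_assoc] using this

lemma rel2 : Commute a (t⁻¹ * a * t) := by
  have h : a⁻¹ * (t⁻¹ * a * t)⁻¹ * a * (t⁻¹ * a * t) = 1 := by
    have := rel_eq_one (show (FreeGroup.of Gen.a)⁻¹ *
        ((FreeGroup.of Gen.t)⁻¹ * FreeGroup.of Gen.a * FreeGroup.of Gen.t)⁻¹ *
        FreeGroup.of Gen.a *
        ((FreeGroup.of Gen.t)⁻¹ * FreeGroup.of Gen.a * FreeGroup.of Gen.t) ∈ rels from by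
          simp [rels])
    simp only [map_mul, map_inv] at this
    exact this
  exact comm_of_eq_one h

lemma rel3 : Commute s t := by
  have h : s⁻¹ * t⁻¹ * s * t = 1 := by
    have := rel_eq_one (show (FreeGroup.of Gen.s)⁻¹ * (FreeGroup.of Gen.t)⁻¹ *
        FreeGroup.of Gen.s * FreeGroup.of Gen.t ∈ rels from by simp [rels])
    simp only [map_mul, map_inv] at this
    exact this
  exact comm_of_eq_one h

lemma rel4 : s⁻¹ * a * s = a * (t⁻¹ * a * t) := by
  have h : (s⁻¹ * a * s)⁻¹ * (a * (t⁻¹ * a * t)) = 1 := by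
    have := rel_eq_one (show ((FreeGroup.of Gen.s)⁻¹ * FreeGroup.of Gen.a * FreeGroup.of Gen.s)⁻¹ *
        (FreeGroup.of Gen.a *
          ((FreeGroup.of Gen.t)⁻¹ * FreeGroup.of Gen.a * FreeGroup.of Gen.t)) ∈ rels from by
          simp [rels])
    simp only [map_mul, map_inv] at this
    exact this
  exact inv_mul_eq_one.mp h

/-- Conjugation preserves commutation. -/
lemma conj_comm {M : Type*} [Group M] {x y : M} (g : M) (h : Commute x y) :
    Commute (g⁻¹ * x * g) (g⁻¹ * y * g) := by
  rw [commute_iff_eq] at h ⊢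
  simp only [mul_assoc, mul_inv_cancel_left]
  rw [← mul_assoc x y, h, mul_assoc]

/-- `b i = t⁻ⁱ a tⁱ`. -/
def b (i : ℤ) : G := (t ^ i)⁻¹ * a * t ^ i

lemma b_shift (i k : ℤ) : b (i + k) = (t ^ k)⁻¹ * b i * t ^ k := by
  simp [b, zpow_add, mul_assoc]

lemma b_succ (i : ℤ) : b (i + 1) = (t ^ i)⁻¹ * (t⁻¹ * a * t) * t ^ i := by
  rw [show i + 1 = 1 + i from by ring, b_shift 1 i]
  simp [b, mul_assoc]

/-- Conjugation by `s⁻¹` as a monoid hom. -/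
def ψ : G →* G := (MulAut.conj (s : G)⁻¹).toMonoidHom

lemma psi_apply (x : G) : ψ x = s⁻¹ * x * s := by
  simp [ψ, MulAut.conj_apply]

lemma psi_t : ψ t = t := by
  rw [psi_apply, mul_assoc, ← rel3.eq, inv_mul_cancel_left]

lemma psi_a : ψ a = a * (t⁻¹ * a * t) := by rw [psi_apply, rel4]

lemma s_conj_b (i : ℤ) : s⁻¹ * b i * s = b i * b (i + 1) := by
  have h1 : ψ (b i) = (t ^ i)⁻¹ * (a * (t⁻¹ * a * t)) * t ^ i := by
    show ψ ((t ^ i)⁻¹ * a * t ^ i) = _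
    rw [map_mul, map_mul, map_inv, map_zpow, psi_t, psi_a]
  rw [← psi_apply, h1]
  rw [b_succ]
  simp [b, mul_assoc]

lemma adjacent (i : ℤ) : Commute (b i) (b (i + 1)) := by
  have := conj_comm ((t : G) ^ i) rel2
  rwa [show ((t:G) ^ i)⁻¹ * a * t ^ i = b i from rfl, ← b_succ] at this

lemma cancel_comm {M : Type*} [Group M] {x y z w : M} (hxz : Commute x z)
    (hyz : Commute y z) (hyw : Commute y w) (h : Commute (x * y) (z * w)) :
    Commute x w := by
  have hy : Commute y (z * w) := hyz.mul_right hyw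
  have hx : Commute x (z * w) := by
    have h2 : Commute (x * y * y⁻¹) (z * w) := h.mul_left hy.inv_left
    simpa using h2
  have h3 : Commute x (z⁻¹ * (z * w)) := hxz.inv_right.mul_right hx
  simpa [← mul_assoc] using h3

lemma key : ∀ n : ℕ, ∀ i : ℤ, Commute (b i) (b (i + n)) := by
  intro n
  induction n using Nat.strong_induction_on with
  | _ n IH =>
    match n with
    | 0 => intro i; rw [Nat.cast_zero, add_zero]
    | 1 => intro i; exact_mod_cast adjacent i
    | (m + 2) =>
      intro i
      have hm : Commute (b i) (b (i + ((m : ℤ) + 1))) := by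
        have := IH (m + 1) (by omega) i
        rwa [show ((m + 1 : ℕ) : ℤ) = (m : ℤ) + 1 from by push_cast; ring] at this
      have hconj := conj_comm (s : G) hm
      rw [s_conj_b, s_conj_b] at hconj
      have hyz : Commute (b (i + 1)) (b (i + ((m : ℤ) + 1))) := by
        have := IH m (by omega) (i + 1)
        rwa [show (i + 1) + (m : ℤ) = i + ((m : ℤ) + 1) from by ring] at this
      have hyw : Commute (b (i + 1)) (b (i + ((m : ℤ) + 1) + 1)) := by
        have := IH (m + 1) (by omega) (i + 1)
        rwa [show (i + 1) + ((m + 1 : ℕ) : ℤ) = i + ((m : ℤ) + 1) + 1 from by push_cast; ring]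
          at this
      have := cancel_comm hm hyz hyw hconj
      rwa [show i + ((m + 2 : ℕ) : ℤ) = i + ((m : ℤ) + 1) + 1 from by push_cast; ring]


/-- In `G`, the conjugates `a^{tⁱ} = t⁻ⁱ a tⁱ` and `a^{tʲ} = t⁻ʲ a tʲ` commute for all
integers `i, j`. -/
theorem conj_a_t_commute (i j : ℤ) :
    Commute ((t ^ i)⁻¹ * a * t ^ i) ((t ^ j)⁻¹ * a * t ^ j) := by
  show Commute (b i) (b j)
  rcases le_or_gt i j with h | h
  · have := key (j - i).toNat i
    rwa [show i + ((j - i).toNat : ℤ) = j from by omega] at this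
  · have := key (i - j).toNat j
    rw [show j + ((i - j).toNat : ℤ) = i from by omega] at this
    exact this.symm
end

section
/- Let n ≥ 1. Let p₀, p₁, …, p_k be a path in the integer lattice ℤ² with p₀ = p_k = (0,0) and with each step pᵢ₊₁ − pᵢ equal to one of (1,0), (−1,0), (0,1), (0,−1). Suppose the path visits each of the three lines L₁ = {(x,y) ∈ ℤ² : x + y = n}, L₂ = {(x,y) ∈ ℤ² : y = −n}, and L₃ = {(x,y) ∈ ℤ² : x = −n} (that is, for each of the three lines there is some index i with pᵢ on that line). Then k ≥ 6n. -/
private lemma aux1 {n i1 i2 i3 k : ℕ} {x1 y1 x2 y2 x3 y3 : ℤ}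
    (hA : x1 + y1 = (n:ℤ)) (hB : y2 = -(n:ℤ)) (hC : x3 = -(n:ℤ))
    (h1 : i1 ≤ i2) (h2 : i2 ≤ i3) (h3 : i3 ≤ k)
    (d1 : x1.natAbs + y1.natAbs ≤ i1)
    (d2 : (x2-x1).natAbs + (y2-y1).natAbs ≤ i2 - i1)
    (d3 : (x3-x2).natAbs + (y3-y2).natAbs ≤ i3 - i2)
    (d4 : x3.natAbs + y3.natAbs ≤ k - i3) : 6*n ≤ k := by omega

private lemma aux2 {n i1 i2 i3 k : ℕ} {x1 y1 x2 y2 x3 y3 : ℤ}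
    (hA : x1 + y1 = (n:ℤ)) (hC : x2 = -(n:ℤ)) (hB : y3 = -(n:ℤ))
    (h1 : i1 ≤ i2) (h2 : i2 ≤ i3) (h3 : i3 ≤ k)
    (d1 : x1.natAbs + y1.natAbs ≤ i1)
    (d2 : (x2-x1).natAbs + (y2-y1).natAbs ≤ i2 - i1)
    (d3 : (x3-x2).natAbs + (y3-y2).natAbs ≤ i3 - i2)
    (d4 : x3.natAbs + y3.natAbs ≤ k - i3) : 6*n ≤ k := by omega

private lemma aux3 {n i1 i2 i3 k : ℕ} {x1 y1 x2 y2 x3 y3 : ℤ}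
    (hB : y1 = -(n:ℤ)) (hA : x2 + y2 = (n:ℤ)) (hC : x3 = -(n:ℤ))
    (h1 : i1 ≤ i2) (h2 : i2 ≤ i3) (h3 : i3 ≤ k)
    (d1 : x1.natAbs + y1.natAbs ≤ i1)
    (d2 : (x2-x1).natAbs + (y2-y1).natAbs ≤ i2 - i1)
    (d3 : (x3-x2).natAbs + (y3-y2).natAbs ≤ i3 - i2)
    (d4 : x3.natAbs + y3.natAbs ≤ k - i3) : 6*n ≤ k := by omega

private lemma aux4 {n i1 i2 i3 k : ℕ} {x1 y1 x2 y2 x3 y3 : ℤ}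
    (hC : x1 = -(n:ℤ)) (hA : x2 + y2 = (n:ℤ)) (hB : y3 = -(n:ℤ))
    (h1 : i1 ≤ i2) (h2 : i2 ≤ i3) (h3 : i3 ≤ k)
    (d1 : x1.natAbs + y1.natAbs ≤ i1)
    (d2 : (x2-x1).natAbs + (y2-y1).natAbs ≤ i2 - i1)
    (d3 : (x3-x2).natAbs + (y3-y2).natAbs ≤ i3 - i2)
    (d4 : x3.natAbs + y3.natAbs ≤ k - i3) : 6*n ≤ k := by omega

private lemma aux5 {n i1 i2 i3 k : ℕ} {x1 y1 x2 y2 x3 y3 : ℤ}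
    (hB : y1 = -(n:ℤ)) (hC : x2 = -(n:ℤ)) (hA : x3 + y3 = (n:ℤ))
    (h1 : i1 ≤ i2) (h2 : i2 ≤ i3) (h3 : i3 ≤ k)
    (d1 : x1.natAbs + y1.natAbs ≤ i1)
    (d2 : (x2-x1).natAbs + (y2-y1).natAbs ≤ i2 - i1)
    (d3 : (x3-x2).natAbs + (y3-y2).natAbs ≤ i3 - i2)
    (d4 : x3.natAbs + y3.natAbs ≤ k - i3) : 6*n ≤ k := by omega

private lemma aux6 {n i1 i2 i3 k : ℕ} {x1 y1 x2 y2 x3 y3 : ℤ}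
    (hC : x1 = -(n:ℤ)) (hB : y2 = -(n:ℤ)) (hA : x3 + y3 = (n:ℤ))
    (h1 : i1 ≤ i2) (h2 : i2 ≤ i3) (h3 : i3 ≤ k)
    (d1 : x1.natAbs + y1.natAbs ≤ i1)
    (d2 : (x2-x1).natAbs + (y2-y1).natAbs ≤ i2 - i1)
    (d3 : (x3-x2).natAbs + (y3-y2).natAbs ≤ i3 - i2)
    (d4 : x3.natAbs + y3.natAbs ≤ k - i3) : 6*n ≤ k := by omega

/-- Any closed lattice path in `ℤ²` starting and ending at the origin, with unit
coordinate steps, that visits the three lines `L₁ = {x + y = n}`, `L₂ = {y = -n}` and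
`L₃ = {x = -n}` has length at least `6n`. -/
theorem lattice_path_visiting_three_lines (n : ℕ) (hn : 1 ≤ n)
    (k : ℕ) (p : ℕ → ℤ × ℤ)
    (h0 : p 0 = (0, 0)) (hk : p k = (0, 0))
    (hstep : ∀ i : ℕ, i < k →
      p (i + 1) - p i ∈ ({(1, 0), (-1, 0), (0, 1), (0, -1)} : Set (ℤ × ℤ)))
    (hL1 : ∃ i : ℕ, i ≤ k ∧ (p i).1 + (p i).2 = (n : ℤ))
    (hL2 : ∃ i : ℕ, i ≤ k ∧ (p i).2 = -(n : ℤ))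
    (hL3 : ∃ i : ℕ, i ≤ k ∧ (p i).1 = -(n : ℤ)) :
    6 * n ≤ k := by
  have dist : ∀ j : ℕ, j ≤ k → ∀ i : ℕ, i ≤ j →
      ((p j).1 - (p i).1).natAbs + ((p j).2 - (p i).2).natAbs ≤ j - i := by
    intro j
    induction j with
    | zero => intro _ i hi; interval_cases i; simp
    | succ j ih =>
      intro hjk i hij
      rcases Nat.eq_or_lt_of_le hij with h | h
      · subst h; simp
      · have hij' : i ≤ j := Nat.lt_succ_iff.mp h
        have hd := ih (by omega) i hij'
        have hs := hstep j (by omega)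
        simp only [Set.mem_insert_iff, Set.mem_singleton_iff, Prod.ext_iff,
          Prod.fst_sub, Prod.snd_sub] at hs
        omega
  obtain ⟨i₁, hi₁, hA⟩ := hL1
  obtain ⟨i₂, hi₂, hB⟩ := hL2
  obtain ⟨i₃, hi₃, hC⟩ := hL3
  rcases le_total i₁ i₂ with h12 | h12 <;> rcases le_total i₂ i₃ with h23 | h23 <;>
    rcases le_total i₁ i₃ with h13 | h13
  · -- order i₁ ≤ i₂ ≤ i₃
    have d1 := dist i₁ (by omega) 0 (Nat.zero_le _)
    have d2 := dist i₂ (by omega) i₁ h12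
    have d3 := dist i₃ hi₃ i₂ h23
    have d4 := dist k le_rfl i₃ hi₃
    simp [h0, hk] at d1 d4
    exact aux1 hA hB hC h12 h23 hi₃ d1 d2 d3 d4
  · -- all equal; still i₁ ≤ i₂ ≤ i₃ available
    have d1 := dist i₁ (by omega) 0 (Nat.zero_le _)
    have d2 := dist i₂ (by omega) i₁ h12
    have d3 := dist i₃ hi₃ i₂ h23
    have d4 := dist k le_rfl i₃ hi₃
    simp [h0, hk] at d1 d4
    exact aux1 hA hB hC h12 h23 hi₃ d1 d2 d3 d4
  · -- order i₁ ≤ i₃ ≤ i₂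
    have d1 := dist i₁ (by omega) 0 (Nat.zero_le _)
    have d2 := dist i₃ (by omega) i₁ h13
    have d3 := dist i₂ hi₂ i₃ h23
    have d4 := dist k le_rfl i₂ hi₂
    simp [h0, hk] at d1 d4
    exact aux2 hA hC hB h13 h23 hi₂ d1 d2 d3 d4
  · -- order i₃ ≤ i₁ ≤ i₂
    have d1 := dist i₃ (by omega) 0 (Nat.zero_le _)
    have d2 := dist i₁ (by omega) i₃ h13
    have d3 := dist i₂ hi₂ i₁ h12
    have d4 := dist k le_rfl i₂ hi₂
    simp [h0, hk] at d1 d4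
    exact aux4 hC hA hB h13 h12 hi₂ d1 d2 d3 d4
  · -- order i₂ ≤ i₁ ≤ i₃
    have d1 := dist i₂ (by omega) 0 (Nat.zero_le _)
    have d2 := dist i₁ (by omega) i₂ h12
    have d3 := dist i₃ hi₃ i₁ h13
    have d4 := dist k le_rfl i₃ hi₃
    simp [h0, hk] at d1 d4
    exact aux3 hB hA hC h12 h13 hi₃ d1 d2 d3 d4
  · -- order i₂ ≤ i₃ ≤ i₁
    have d1 := dist i₂ (by omega) 0 (Nat.zero_le _)
    have d2 := dist i₃ (by omega) i₂ h23
    have d3 := dist i₁ hi₁ i₃ h13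
    have d4 := dist k le_rfl i₁ hi₁
    simp [h0, hk] at d1 d4
    exact aux5 hB hC hA h23 h13 hi₁ d1 d2 d3 d4
  · -- degenerate: order i₁ ≤ i₃ ≤ i₂
    have d1 := dist i₁ (by omega) 0 (Nat.zero_le _)
    have d2 := dist i₃ (by omega) i₁ h13
    have d3 := dist i₂ hi₂ i₃ h23
    have d4 := dist k le_rfl i₂ hi₂
    simp [h0, hk] at d1 d4
    exact aux2 hA hC hB h13 h23 hi₂ d1 d2 d3 d4
  · -- order i₃ ≤ i₂ ≤ i₁
    have d1 := dist i₃ (by omega) 0 (Nat.zero_le _)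
    have d2 := dist i₂ (by omega) i₃ h23
    have d3 := dist i₁ hi₁ i₂ h12
    have d4 := dist k le_rfl i₁ hi₁
    simp [h0, hk] at d1 d4
    exact aux6 hC hB hA h23 h12 hi₁ d1 d2 d3 d4
end
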